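/- Let p be a prime. Then every Schur partition of the cyclic group ℤ/pℤ is automorphic; that is, for every Schur partition S of ℤ/pℤ there exists a subgroup H of the unit group (ℤ/pℤ)ˣ, acting on ℤ/pℤ by multiplication, such that the blocks of S are exactly the H-orbits in ℤ/pℤ. -/

import Mathlib

open scoped Pointwise

noncomputable def classSum {G : Type*} [AddCommGroup G] (C : Set G) :
    AddMonoidAlgebra ℚ G :=
  ∑ᶠ g ∈ C, AddMonoidAlgebra.single g (1 : ℚ)

def IsSchurPartition {G : Type*} [AddCommGroup G] (P : Set (Set G)) : Prop :=
  Setoid.IsPartition P ∧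
  ({0} : Set G) ∈ P ∧
  (∀ C ∈ P, -C ∈ P) ∧
  ∀ C ∈ P, ∀ D ∈ P,
    classSum C * classSum D ∈ AddSubmonoid.closure (classSum '' P)

noncomputable def Omega (n : ℕ) : ℕ :=
  Nat.card {P : Set (Set (ZMod n)) // IsSchurPartition P}

/-!
For `t : ZMod p` let `χ_t : ℚ[ℤ/p] → ℂ` be the algebra map sending `g` to `ζ^{tg}`, where `ζ` is
a primitive `p`-th root of unity. Let `H ≤ (ℤ/p)ˣ` be the group of units fixing every block of `S`,
and `A` the `ℚ`-span of the class sums: it is a subalgebra because `S` is Schur, and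
`dim A ≤ |S|`.

If `χ_a` and `χ_b` agree on `A`, then `a` and `b` lie in the same `H`-orbit: for `a, b ≠ 0` every
block `C` satisfies `∑_{x ∈ C} ζ^{ax} = ∑_{x ∈ C} ζ^{bx}`, and as the only `ℚ`-linear relation
among the `p`-th roots of unity is that they sum to zero, `(a/b)C = C`. Hence the number of
`H`-orbits is at most the number of distinct restrictions `χ_t|_A`, which is at most
`dim A ≤ |S|` since distinct algebra maps are linearly independent. Each block being a union of
`H`-orbits, blocks and orbits coincide.
-/

open MulAction

theorem Setoid.ker_eq_of_card_range_le {α β : Type*} [Finite α] {f : α → β} {r : Setoid α}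
    (hf : Setoid.ker f ≤ r) (hcard : Nat.card (Set.range f) ≤ Nat.card (Quotient r)) :
    Setoid.ker f = r := by
  let g : Quotient (Setoid.ker f) → Quotient r := Quotient.map' id hf
  have hg : Function.Surjective g := Quotient.ind fun a ↦ ⟨⟦a⟧, rfl⟩
  have hinj := (hg.bijective_of_nat_card_le
    ((Nat.card_congr (Setoid.quotientKerEquivRange f)).trans_le hcard)).1
  exact le_antisymm hf fun a b hab ↦ Quotient.exact (hinj (Quotient.sound hab))

section Stabilizer

variable {M α : Type*} [Group M] [MulAction M α]

variable (M) in
def blocksStabilizer (S : Set (Set α)) : Subgroup M :=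
  ⨅ C ∈ S, stabilizer M C

lemma mem_blocksStabilizer {S : Set (Set α)} {g : M} :
    g ∈ blocksStabilizer M S ↔ ∀ C ∈ S, g • C = C := by
  simp [blocksStabilizer, Subgroup.mem_iInf, mem_stabilizer_iff]

lemma orbitRel_blocksStabilizer_le {S : Set (Set α)} (hS : Setoid.IsPartition S) :
    orbitRel (blocksStabilizer M S) α ≤ Setoid.mkClasses S hS.2 := by
  rintro x y ⟨⟨g, hg⟩, rfl⟩ C hC hxC
  rw [← mem_blocksStabilizer.1 hg C hC] at hxC
  exact Set.smul_mem_smul_set_iff.1 hxC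

end Stabilizer

section ClassSum

variable {G : Type*} [AddCommGroup G] {S : Set (Set G)}

lemma classSum_coeff [Fintype G] (C : Set G) [DecidablePred (· ∈ C)] (g : G) :
    (classSum C).coeff g = if g ∈ C then 1 else 0 := by
  classical
  rw [classSum, finsum_mem_eq_toFinset_sum, AddMonoidAlgebra.coeff_sum, Finsupp.finsetSum_apply]
  simp [AddMonoidAlgebra.coeff_single, Finsupp.single_apply]

lemma classSum_singleton_zero : classSum ({0} : Set G) = 1 := by
  rw [classSum, finsum_mem_singleton, AddMonoidAlgebra.one_def]

lemma classSum_univ_eq_finsum [Finite G] (hS : Setoid.IsPartition S) :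
    classSum (Set.univ : Set G) = ∑ᶠ C ∈ S, classSum C := by
  rw [classSum, ← hS.sUnion_eq_univ,
    finsum_mem_sUnion hS.pairwiseDisjoint S.toFinite fun C _ ↦ C.toFinite]
  rfl

lemma smul_eq_self_of_classSum_coeff_units_mul {R : Type*} [Ring R] [Fintype R] {C : Set R}
    {u : Rˣ} (h : ∀ x, (classSum C).coeff (u * x) = (classSum C).coeff x) : u • C = C := by
  classical
  ext x
  have := h (↑u⁻¹ * x)
  rw [Units.mul_inv_cancel_left, classSum_coeff, classSum_coeff] at this
  rw [Set.mem_smul_set_iff_inv_smul_mem, Units.smul_def]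
  split_ifs at this <;> simp_all

lemma mul_mem_span_classSum (hS : IsSchurPartition S) {x y : AddMonoidAlgebra ℚ G}
    (hx : x ∈ Submodule.span ℚ (classSum '' S)) (hy : y ∈ Submodule.span ℚ (classSum '' S)) :
    x * y ∈ Submodule.span ℚ (classSum '' S) := by
  suffices h : Submodule.span ℚ (classSum '' S) * Submodule.span ℚ (classSum '' S) ≤
      Submodule.span ℚ (classSum '' S) from h (Submodule.mul_mem_mul hx hy)
  rw [Submodule.span_mul_span, Submodule.span_le]
  rintro _ ⟨_, ⟨C, hC, rfl⟩, _, ⟨D, hD, rfl⟩, rfl⟩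
  exact AddSubmonoid.closure_le.2 (Submodule.subset_span (R := ℚ)) (hS.2.2.2 C hC D hD)

noncomputable def schurSubalgebra (hS : IsSchurPartition S) :
    Subalgebra ℚ (AddMonoidAlgebra ℚ G) :=
  (Submodule.span ℚ (classSum '' S)).toSubalgebra
    (classSum_singleton_zero (G := G) ▸ Submodule.subset_span ⟨{0}, hS.2.1, rfl⟩)
    fun _ _ ↦ mul_mem_span_classSum hS

lemma classSum_mem_schurSubalgebra (hS : IsSchurPartition S) {C : Set G} (hC : C ∈ S) :
    classSum C ∈ schurSubalgebra hS :=
  Submodule.subset_span ⟨C, hC, rfl⟩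

lemma classSum_univ_mem_schurSubalgebra [Finite G] (hS : IsSchurPartition S) :
    classSum Set.univ ∈ schurSubalgebra hS := by
  rw [classSum_univ_eq_finsum hS.1]
  exact finsum_mem_induction (· ∈ schurSubalgebra hS) (Subalgebra.zero_mem _)
    (fun _ _ ↦ Subalgebra.add_mem _) fun _ ↦ classSum_mem_schurSubalgebra hS

lemma finrank_schurSubalgebra_le [Finite G] (hS : IsSchurPartition S) :
    Module.finrank ℚ (schurSubalgebra hS) ≤ S.ncard := by
  have := Fintype.ofFinite (classSum '' S)
  calc Module.finrank ℚ (schurSubalgebra hS)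
      ≤ (classSum '' S).toFinset.card := finrank_span_le_card (R := ℚ) (classSum '' S)
    _ = (classSum '' S).ncard := (Set.ncard_eq_toFinset_card' _).symm
    _ ≤ S.ncard := Set.ncard_image_le S.toFinite

end ClassSum

section Character

variable {G K : Type*} [AddCommGroup G] [Field K] [CharZero K]

noncomputable def AddChar.liftAlgHom (ψ : AddChar G K) : AddMonoidAlgebra ℚ G →ₐ[ℚ] K :=
  AddMonoidAlgebra.lift ℚ K G ψ.toMonoidHom

lemma AddChar.liftAlgHom_apply [Fintype G] (ψ : AddChar G K) (f : AddMonoidAlgebra ℚ G) :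
    ψ.liftAlgHom f = ∑ g, (f.coeff g : K) * ψ g := by
  rw [AddChar.liftAlgHom, AddMonoidAlgebra.lift_apply, Finsupp.sum_fintype _ _ (by simp)]
  simp [Rat.smul_def]

end Character

lemma AddChar.IsPrimitive.mulShift {R M : Type*} [CommRing R] [NoZeroDivisors R] [CommMonoid M]
    {ψ : AddChar R M} (hψ : ψ.IsPrimitive) {t : R} (ht : t ≠ 0) :
    (ψ.mulShift t).IsPrimitive := fun _ ha ↦ by
  rw [AddChar.mulShift_mulShift]
  exact hψ (mul_ne_zero ht ha)

section ZMod

variable {p : ℕ}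

lemma AddChar.IsPrimitive.isPrimitiveRoot_apply_one {M : Type*} [CommMonoid M] [NeZero p]
    {ψ : AddChar (ZMod p) M} (hψ : ψ.IsPrimitive) :
    IsPrimitiveRoot (ψ 1) p where
  pow_eq_one := by
    rw [← AddChar.map_nsmul_eq_pow, nsmul_one, ZMod.natCast_self, AddChar.map_zero_eq_one]
  dvd_of_pow_eq_one l hl := by
    rwa [← AddChar.map_nsmul_eq_pow, nsmul_one, AddChar.IsPrimitive.zmod_char_eq_one_iff p hψ,
      ZMod.natCast_eq_zero_iff] at hl

variable {K : Type*} [Field K] [CharZero K] {ψ : AddChar (ZMod p) K}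

lemma AddChar.IsPrimitive.apply_eq_of_sum_mul_eq_zero [Fact p.Prime] (hψ : ψ.IsPrimitive)
    {F : ZMod p → ℚ} (h : ∑ x, (F x : K) * ψ x = 0) (x y : ZMod p) : F x = F y := by
  have hp : p.Prime := Fact.out
  have hψ_pow (x : ZMod p) : ψ x = ψ 1 ^ x.val := by
    rw [← AddChar.map_nsmul_eq_pow, nsmul_one, ZMod.natCast_zmod_val]
  rw [Finset.sum_congr rfl fun x _ ↦ by rw [hψ_pow x]] at h
  -- for `p = n + 1`, `ZMod p` is `Fin p` by definition, as `sum_eq_zero_iff_forall_eq` needs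
  obtain ⟨n, rfl⟩ : ∃ n, p = n + 1 := Nat.exists_eq_succ_of_ne_zero hp.ne_zero
  exact (hψ.isPrimitiveRoot_apply_one.sum_eq_zero_iff_forall_eq hp F).1 h x y

lemma AddChar.IsPrimitive.coeff_units_mul_of_liftAlgHom_mulShift_eq [Fact p.Prime]
    (hψ : ψ.IsPrimitive) {f : AddMonoidAlgebra ℚ (ZMod p)} {u : (ZMod p)ˣ}
    (h : (ψ.mulShift u).liftAlgHom f = ψ.liftAlgHom f) (x : ZMod p) :
    f.coeff (u * x) = f.coeff x := by
  have hshift : ∑ y, (f.coeff (↑u⁻¹ * y) : K) * ψ y = (ψ.mulShift u).liftAlgHom f := by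
    rw [AddChar.liftAlgHom_apply]
    exact (Fintype.sum_equiv (Units.mulLeft u) _ _ fun y ↦ by
      rw [Units.mulLeft_apply, ← mul_assoc, Units.inv_mul, one_mul,
        AddChar.mulShift_apply]).symm
  have hsum : ∑ y, ((f.coeff (↑u⁻¹ * y) - f.coeff y : ℚ) : K) * ψ y = 0 := by
    simp only [Rat.cast_sub, sub_mul, Finset.sum_sub_distrib, hshift, h,
      AddChar.liftAlgHom_apply, sub_self]
  -- `y ↦ f (u⁻¹ y) - f y` is therefore constant, and it vanishes at `0`
  have := hψ.apply_eq_of_sum_mul_eq_zero hsum (u * x) 0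
  rwa [Units.inv_mul_cancel_left, mul_zero, sub_self, sub_eq_zero, eq_comm] at this

lemma AddChar.IsPrimitive.liftAlgHom_mulShift_classSum_univ [NeZero p] (hψ : ψ.IsPrimitive)
    (t : ZMod p) :
    (ψ.mulShift t).liftAlgHom (classSum Set.univ) = if t = 0 then (p : K) else 0 := by
  classical
  rw [AddChar.liftAlgHom_apply]
  simpa [classSum_coeff, mul_comm t, ZMod.card] using AddChar.sum_mulShift t hψ

end ZMod

lemma mem_orbit_blocksStabilizer_of_liftAlgHom_comp_eq {p : ℕ} [Fact p.Prime] {K : Type*}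
    [Field K] [CharZero K] {ψ : AddChar (ZMod p) K} (hψ : ψ.IsPrimitive) {S : Set (Set (ZMod p))}
    (hS : IsSchurPartition S) {a b : ZMod p}
    (h : (ψ.mulShift a).liftAlgHom.comp (schurSubalgebra hS).val =
      (ψ.mulShift b).liftAlgHom.comp (schurSubalgebra hS).val) :
    a ∈ orbit (blocksStabilizer (ZMod p)ˣ S) b := by
  have hA {f} (hf : f ∈ schurSubalgebra hS) :
      (ψ.mulShift a).liftAlgHom f = (ψ.mulShift b).liftAlgHom f :=
    AlgHom.congr_fun h ⟨f, hf⟩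
  have hzero : a = 0 ↔ b = 0 := by
    have := hA (classSum_univ_mem_schurSubalgebra hS)
    rw [hψ.liftAlgHom_mulShift_classSum_univ, hψ.liftAlgHom_mulShift_classSum_univ] at this
    have hp : (p : K) ≠ 0 := Nat.cast_ne_zero.2 (NeZero.ne p)
    by_cases ha : a = 0 <;> by_cases hb : b = 0 <;> simp [ha, hb, hp, hp.symm] at this ⊢
  by_cases hb : b = 0
  · rw [hzero.2 hb, hb]
    exact mem_orbit_self _
  let u := Units.mk0 a (hzero.not.2 hb) / Units.mk0 b hb
  have hub : (u : ZMod p) * b = a := by simp [u, hb]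
  refine ⟨⟨u, mem_blocksStabilizer.2 fun C hC ↦ smul_eq_self_of_classSum_coeff_units_mul ?_⟩,
    hub⟩
  refine (hψ.mulShift hb).coeff_units_mul_of_liftAlgHom_mulShift_eq ?_
  rw [AddChar.mulShift_mulShift, mul_comm, hub]
  exact hA (classSum_mem_schurSubalgebra hS hC)

/-- Every Schur partition of `ℤ/pℤ`, `p` prime, is automorphic: its blocks are the orbits
of a subgroup `H` of the unit group `(ℤ/pℤ)ˣ` acting by multiplication. -/
theorem schur_partition_prime_automorphic (p : ℕ) (hp : p.Prime)
    (S : Set (Set (ZMod p))) (hS : IsSchurPartition S) :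
    ∃ H : Subgroup (ZMod p)ˣ,
      S = {C : Set (ZMod p) | ∃ a : ZMod p,
            C = {x : ZMod p | ∃ u ∈ H, (u : ZMod p) * a = x}} := by
  have := Fact.mk hp
  let A := schurSubalgebra hS
  let χ (t : ZMod p) : A →ₐ[ℚ] ℂ := (ZMod.stdAddChar.mulShift t).liftAlgHom.comp A.val
  have hker : Setoid.ker χ ≤ orbitRel (blocksStabilizer (ZMod p)ˣ S) (ZMod p) := fun _ _ h ↦
    mem_orbit_blocksStabilizer_of_liftAlgHom_comp_eq (ZMod.isPrimitive_stdAddChar p) hS h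
  have hle := orbitRel_blocksStabilizer_le (M := (ZMod p)ˣ) hS.1
  have hcard : Nat.card (Set.range χ) ≤ Nat.card (Quotient (Setoid.mkClasses S hS.1.2)) := calc
    _ ≤ Nat.card (A →ₐ[ℚ] ℂ) := Finite.card_subtype_le _
    _ ≤ Module.finrank ℚ A := card_algHom_le_finrank ℚ A ℂ
    _ ≤ S.ncard := finrank_schurSubalgebra_le hS
    _ = Nat.card (Quotient (Setoid.mkClasses S hS.1.2)) := by
      rw [Nat.card_congr (Setoid.quotientEquivClasses _), Setoid.classes_mkClasses S hS.1,
        Nat.card_coe_set_eq]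
  have horbit : orbitRel (blocksStabilizer (ZMod p)ˣ S) (ZMod p) =
      Setoid.mkClasses S hS.1.2 :=
    le_antisymm hle ((Setoid.ker_eq_of_card_range_le (hker.trans hle) hcard).ge.trans hker)
  refine ⟨blocksStabilizer (ZMod p)ˣ S, ?_⟩
  nth_rw 1 [← Setoid.classes_mkClasses S hS.1, ← horbit]
  ext C
  simp [Setoid.classes, orbitRel_apply, mem_orbit_iff, Units.smul_def]
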